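/- For every r > 1 and φ ∈ (-π/2,π/2), the Hessian of F_r(v) = |v|^r on ℝ² \ {0} satisfies (1/2)(H(F_r)(v) O_φ + O_{-φ} H(F_r)(v)) = r|v|^{r-2} cos φ · D_{r,φ}(v), where O_φ is the rotation matrix by angle φ. -/

import Mathlib

/-!
For `v ≠ 0` the Hessian of `‖v‖ ^ r` is `r ‖v‖^(r-2) (I + (r - 2) u uᵀ)` with `u = v / ‖v‖`,
and for `u = (cos ψ, sin ψ)` one has `u uᵀ = (I + K(2ψ)) / 2`, so the Hessian is
`r ‖v‖^(r-2) ((r/2) I + ((r-2)/2) K(2ψ))`. Since `K` is a reflection matrix,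
`K(α) O_φ = O_{-φ} K(α) = K(α - φ)`, while `O_φ + O_{-φ} = 2 cos φ I`; symmetrizing therefore
turns `a I + b K(2ψ)` into `a cos φ I + b K(2ψ - φ)`, which is the claimed matrix.
-/

noncomputable section
open Real Matrix

def Kmat (α : ℝ) : Matrix (Fin 2) (Fin 2) ℝ :=
  !![Real.cos α, Real.sin α; Real.sin α, -Real.cos α]

def Omat (φ : ℝ) : Matrix (Fin 2) (Fin 2) ℝ :=
  !![Real.cos φ, -Real.sin φ; Real.sin φ, Real.cos φ]

/-- The matrix `D_{r,φ}(v)` of Bakry, for `v ∈ ℝ² ≅ ℂ`. -/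
def DmatC (r φ : ℝ) (v : ℂ) : Matrix (Fin 2) (Fin 2) ℝ :=
  (r / 2) • ((1 : Matrix (Fin 2) (Fin 2) ℝ) +
    ((1 - 2 / r) / Real.cos φ) • Kmat (2 * Complex.arg v - φ))

def dir : Fin 2 → ℂ := ![1, Complex.I]

/-- The Hessian of `F_r(v) = |v|^r` on `ℝ² ≅ ℂ`. -/
def HFr (r : ℝ) (v : ℂ) : Matrix (Fin 2) (Fin 2) ℝ :=
  Matrix.of fun i j =>
    deriv (fun s : ℝ =>
      deriv (fun t : ℝ => ‖v + (s : ℂ) * dir i + (t : ℂ) * dir j‖ ^ r) 0) 0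

open scoped RealInnerProductSpace

section NormRpow

variable {E : Type*} [NormedAddCommGroup E] [InnerProductSpace ℝ E]

theorem HasDerivAt.norm_rpow {f : ℝ → E} {f' : E} {t : ℝ} (hf : HasDerivAt f f' t)
    (h0 : f t ≠ 0) (p : ℝ) :
    HasDerivAt (fun s => ‖f s‖ ^ p) (p * ‖f t‖ ^ (p - 2) * ⟪f t, f'⟫) t := by
  have hsq : ∀ (x : E) (q : ℝ), (‖x‖ ^ 2) ^ q = ‖x‖ ^ (2 * q) := fun x q => by
    rw [← Real.rpow_natCast, ← Real.rpow_mul (norm_nonneg x), Nat.cast_ofNat]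
  have h := hf.norm_sq.rpow_const (p := p / 2) (Or.inl (by positivity))
  simp only [hsq, mul_div_cancel₀ p two_ne_zero] at h
  convert h using 1
  rw [show 2 * (p / 2 - 1) = p - 2 by ring]
  ring

theorem hasDerivAt_add_smul (x d : E) : HasDerivAt (fun t : ℝ => x + t • d) d 0 := by
  simpa using ((hasDerivAt_id (0 : ℝ)).smul_const d).const_add x

theorem hasDerivAt_norm_rpow_add_smul {x : E} (hx : x ≠ 0) (d : E) (p : ℝ) :
    HasDerivAt (fun t : ℝ => ‖x + t • d‖ ^ p) (p * ‖x‖ ^ (p - 2) * ⟪x, d⟫) 0 := by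
  simpa using (hasDerivAt_add_smul x d).norm_rpow (by simpa using hx) p

theorem deriv_deriv_norm_rpow_add_smul {x : E} (hx : x ≠ 0) (d e : E) (p : ℝ) :
    deriv (fun s : ℝ => deriv (fun t : ℝ => ‖x + s • d + t • e‖ ^ p) 0) 0 =
      p * (p - 2) * ‖x‖ ^ (p - 4) * ⟪x, d⟫ * ⟪x, e⟫ + p * ‖x‖ ^ (p - 2) * ⟪d, e⟫ := by
  have hline := hasDerivAt_add_smul x d
  have hne : ∀ᶠ s : ℝ in nhds 0, x + s • d ≠ 0 :=
    hline.continuousAt.eventually_ne (by simpa using hx)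
  have hfirst : (fun s : ℝ => deriv (fun t : ℝ => ‖x + s • d + t • e‖ ^ p) 0) =ᶠ[nhds 0]
      fun s => p * ‖x + s • d‖ ^ (p - 2) * ⟪x + s • d, e⟫ :=
    hne.mono fun s hs => (hasDerivAt_norm_rpow_add_smul hs e p).deriv
  have hsecond := ((hline.norm_rpow (by simpa using hx) (p - 2)).const_mul p).fun_mul
    (hline.inner ℝ (hasDerivAt_const 0 e))
  rw [hfirst.deriv_eq, hsecond.deriv]
  simp only [zero_smul, add_zero, inner_zero_right, zero_add]
  ring_nf

end NormRpow

lemma HFr_apply (r : ℝ) {v : ℂ} (hv : v ≠ 0) (i j : Fin 2) :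
    HFr r v i j = r * (r - 2) * ‖v‖ ^ (r - 4) * ⟪v, dir i⟫ * ⟪v, dir j⟫
      + r * ‖v‖ ^ (r - 2) * ⟪dir i, dir j⟫ := by
  simp only [HFr, Matrix.of_apply, ← Complex.real_smul]
  exact deriv_deriv_norm_rpow_add_smul hv _ _ r

lemma HFr_eq_smul_one_add_smul_Kmat (r : ℝ) {v : ℂ} (hv : v ≠ 0) :
    HFr r v = (r ^ 2 / 2 * ‖v‖ ^ (r - 2)) • 1
      + (r * (r - 2) / 2 * ‖v‖ ^ (r - 2)) • Kmat (2 * Complex.arg v) := by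
  have hpow : ‖v‖ ^ (r - 4) * ‖v‖ ^ 2 = ‖v‖ ^ (r - 2) := by
    rw [← Real.rpow_natCast, ← Real.rpow_add (norm_pos_iff.2 hv)]
    norm_num
    ring_nf
  have hpyth := Real.sin_sq_add_cos_sq (Complex.arg v)
  ext i j
  rw [HFr_apply r hv]
  fin_cases i <;> fin_cases j <;>
    simp [dir, Kmat, Complex.inner, Real.cos_two_mul, Real.sin_two_mul] <;>
    simp only [← Complex.norm_mul_cos_arg v, ← Complex.norm_mul_sin_arg v]
  · linear_combination r * (r - 2) * Real.cos (Complex.arg v) ^ 2 * hpow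
  · linear_combination r * (r - 2) * Real.cos (Complex.arg v) * Real.sin (Complex.arg v) * hpow
  · linear_combination r * (r - 2) * Real.cos (Complex.arg v) * Real.sin (Complex.arg v) * hpow
  · linear_combination r * (r - 2) * Real.sin (Complex.arg v) ^ 2 * hpow
      + r * (r - 2) * ‖v‖ ^ (r - 2) * hpyth

lemma Kmat_mul_Omat (α φ : ℝ) : Kmat α * Omat φ = Kmat (α - φ) := by
  ext i j
  fin_cases i <;> fin_cases j <;>
    simp [Kmat, Omat, Matrix.mul_apply, Real.cos_sub, Real.sin_sub] <;> ring

lemma Omat_neg_mul_Kmat (α φ : ℝ) : Omat (-φ) * Kmat α = Kmat (α - φ) := by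
  ext i j
  fin_cases i <;> fin_cases j <;>
    simp [Kmat, Omat, Matrix.mul_apply, Real.cos_sub, Real.sin_sub] <;> ring

lemma Omat_add_Omat_neg (φ : ℝ) : Omat φ + Omat (-φ) = (2 * Real.cos φ) • 1 := by
  ext i j
  fin_cases i <;> fin_cases j <;> simp [Omat] <;> ring

lemma symmetrize_Omat_smul_one_add_smul_Kmat (a b α φ : ℝ) :
    (1 / 2 : ℝ) • ((a • 1 + b • Kmat α) * Omat φ + Omat (-φ) * (a • 1 + b • Kmat α)) =
      (a * Real.cos φ) • 1 + b • Kmat (α - φ) := by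
  rw [add_mul, mul_add, smul_mul_assoc, smul_mul_assoc, mul_smul_comm, mul_smul_comm, one_mul,
    mul_one, Kmat_mul_Omat, Omat_neg_mul_Kmat]
  calc (1 / 2 : ℝ) • (a • Omat φ + b • Kmat (α - φ) + (a • Omat (-φ) + b • Kmat (α - φ)))
      = (1 / 2 : ℝ) • (a • (Omat φ + Omat (-φ)) + (2 * b) • Kmat (α - φ)) := by module
    _ = (a * Real.cos φ) • 1 + b • Kmat (α - φ) := by rw [Omat_add_Omat_neg]; module

theorem stmt18 (r φ : ℝ) (hr : 1 < r) (hφ : φ ∈ Set.Ioo (-(π / 2)) (π / 2))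
    (v : ℂ) (hv : v ≠ 0) :
    (1 / 2 : ℝ) • (HFr r v * Omat φ + Omat (-φ) * HFr r v) =
      (r * ‖v‖ ^ (r - 2) * Real.cos φ) • DmatC r φ v := by
  have hcos : Real.cos φ ≠ 0 := (Real.cos_pos_of_mem_Ioo hφ).ne'
  have hr0 : r ≠ 0 := by linarith
  rw [HFr_eq_smul_one_add_smul_Kmat r hv, symmetrize_Omat_smul_one_add_smul_Kmat, DmatC,
    smul_smul, smul_add, smul_smul]
  congr 2 <;> field_simp
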